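/- arXiv:2601.11646 — 2 statements merged into one kernel-verified Lean document; each statement's English description precedes it below -/
import Mathlib

section
/- Define the nondeterministic choice LTS LUB(A₁, A₂): its states are either an undecided state tracking a pair of states of A₁ and A₂ reachable by the same sequence of visible (call) actions, or a decided state consisting of a state of A₁ (choice 1) or a state of A₂ (choice 2). The initial state is undecided at the pair of initial states. Transitions: from an undecided state, a visible action is taken synchronously in both components; an internal 'decide' action moves to the corresponding decided state of either component; from a decided state of Aᵢ, transitions are exactly those of Aᵢ. Then A₁ ≼ LUB(A₁, A₂) and A₂ ≼ LUB(A₁, A₂). -/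
/-- A labelled transition system with states `Q`, alphabet `A`,
initial state `init` and transition relation `step`. -/
structure LTS (Q A : Type) where
  init : Q
  step : Q → A → Q → Prop

/-- Finite transition sequences of an LTS. -/
inductive LTS.Steps {Q A : Type} (M : LTS Q A) : Q → List A → Q → Prop
  | nil (q : Q) : LTS.Steps M q [] q
  | cons {q q' q'' : Q} {α : A} {l : List A} :
      M.step q α q' → LTS.Steps M q' l q'' → LTS.Steps M q (α :: l) q''

/-- `R` is a forward simulation from `M₁` to `M₂` with visible labels `V`. -/
def IsSim {Q₁ Q₂ A : Type} (V : A → Bool) (M₁ : LTS Q₁ A) (M₂ : LTS Q₂ A)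
    (R : Q₁ → Q₂ → Prop) : Prop :=
  R M₁.init M₂.init ∧
  ∀ c₁ c₂ α c₁', R c₁ c₂ → M₁.step c₁ α c₁' →
    ∃ (l : List A) (c₂' : Q₂), M₂.Steps c₂ l c₂' ∧
      l.filter V = [α].filter V ∧ R c₁' c₂'

/-- `M₁ ≼ M₂`: there exists a forward simulation from `M₁` to `M₂`. -/
def Sim {Q₁ Q₂ A : Type} (V : A → Bool) (M₁ : LTS Q₁ A) (M₂ : LTS Q₂ A) : Prop :=
  ∃ R : Q₁ → Q₂ → Prop, IsSim V M₁ M₂ R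

/-- States of the nondeterministic-choice LTS `LUB(M₁, M₂)`: either an undecided
state tracking a pair of states of `M₁` and `M₂`, or a decided state of one of
the two components. -/
inductive LubState (Q₁ Q₂ : Type) where
  | undec (q₁ : Q₁) (q₂ : Q₂)
  | dec₁ (q₁ : Q₁)
  | dec₂ (q₂ : Q₂)

/-- Transitions of `LUB(M₁, M₂)`: in an undecided state, visible actions are
taken synchronously in both components, and the internal decide action `δ` moves
to the corresponding decided state of either component; in a decided state of
`Mᵢ`, transitions are exactly those of `Mᵢ`. -/
def lubStep {Q₁ Q₂ A : Type} (M₁ : LTS Q₁ A) (M₂ : LTS Q₂ A) (V : A → Bool) (δ : A) :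
    LubState Q₁ Q₂ → A → LubState Q₁ Q₂ → Prop := fun s α s' =>
  match s, s' with
  | .undec q₁ q₂, .undec q₁' q₂' => V α = true ∧ M₁.step q₁ α q₁' ∧ M₂.step q₂ α q₂'
  | .undec q₁ _, .dec₁ q => α = δ ∧ q = q₁
  | .undec _ q₂, .dec₂ q => α = δ ∧ q = q₂
  | .dec₁ q, .dec₁ q' => M₁.step q α q'
  | .dec₂ q, .dec₂ q' => M₂.step q α q'
  | _, _ => False

/-- The nondeterministic-choice LTS `LUB(M₁, M₂)`, with initial state undecided
at the pair of initial states. -/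
def lubLTS {Q₁ Q₂ A : Type} (M₁ : LTS Q₁ A) (M₂ : LTS Q₂ A) (V : A → Bool) (δ : A) :
    LTS (LubState Q₁ Q₂) A :=
  ⟨LubState.undec M₁.init M₂.init, lubStep M₁ M₂ V δ⟩

lemma lub_dec₁ {Q₁ Q₂ A : Type} {M₁ : LTS Q₁ A} {M₂ : LTS Q₂ A} {V : A → Bool} {δ : A}
    {q α q'} (h : M₁.step q α q') :
    (lubLTS M₁ M₂ V δ).step (.dec₁ q) α (.dec₁ q') := h

lemma lub_dec₂ {Q₁ Q₂ A : Type} {M₁ : LTS Q₁ A} {M₂ : LTS Q₂ A} {V : A → Bool} {δ : A}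
    {q α q'} (h : M₂.step q α q') :
    (lubLTS M₁ M₂ V δ).step (.dec₂ q) α (.dec₂ q') := h

lemma lub_decide₁ {Q₁ Q₂ A : Type} {M₁ : LTS Q₁ A} {M₂ : LTS Q₂ A} {V : A → Bool} {δ : A}
    {q₁ q₂} : (lubLTS M₁ M₂ V δ).step (.undec q₁ q₂) δ (.dec₁ q₁) := ⟨rfl, rfl⟩

lemma lub_decide₂ {Q₁ Q₂ A : Type} {M₁ : LTS Q₁ A} {M₂ : LTS Q₂ A} {V : A → Bool} {δ : A}
    {q₁ q₂} : (lubLTS M₁ M₂ V δ).step (.undec q₁ q₂) δ (.dec₂ q₂) := ⟨rfl, rfl⟩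

/-- Both components are forward-simulated by `LUB(M₁, M₂)`
(where the decide action `δ` is internal). -/
theorem components_sim_lub {Q₁ Q₂ A : Type} (M₁ : LTS Q₁ A) (M₂ : LTS Q₂ A)
    (V : A → Bool) (δ : A) (hδ : V δ = false) :
    Sim V M₁ (lubLTS M₁ M₂ V δ) ∧ Sim V M₂ (lubLTS M₁ M₂ V δ) := by
  constructor
  · refine ⟨fun c s => s = .dec₁ c ∨ (c = M₁.init ∧ s = (lubLTS M₁ M₂ V δ).init), Or.inr ⟨rfl, rfl⟩, ?_⟩
    rintro c₁ c₂ α c₁' (rfl | ⟨rfl, rfl⟩) hstep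
    · exact ⟨[α], .dec₁ c₁', .cons (lub_dec₁ hstep) (.nil _), rfl, Or.inl rfl⟩
    · refine ⟨[δ, α], .dec₁ c₁', .cons lub_decide₁ (.cons (lub_dec₁ hstep) (.nil _)), ?_, Or.inl rfl⟩
      simp [List.filter, hδ]
  · refine ⟨fun c s => s = .dec₂ c ∨ (c = M₂.init ∧ s = (lubLTS M₁ M₂ V δ).init), Or.inr ⟨rfl, rfl⟩, ?_⟩
    rintro c₁ c₂ α c₁' (rfl | ⟨rfl, rfl⟩) hstep
    · exact ⟨[α], .dec₂ c₁', .cons (lub_dec₂ hstep) (.nil _), rfl, Or.inl rfl⟩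
    · refine ⟨[δ, α], .dec₂ c₁', .cons lub_decide₂ (.cons (lub_dec₂ hstep) (.nil _)), ?_, Or.inl rfl⟩
      simp [List.filter, hδ]
end

section
/- With GLB(A₁, A₂) the synchronous product on visible actions, if A₃ ≼ A₁ and A₃ ≼ A₂, then A₃ ≼ GLB(A₁, A₂): the relation pairing a state of A₃ with a pair (q₁, q₂) such that the state relates to q₁ under the first simulation and to q₂ under the second simulation is a forward simulation. Hence GLB(A₁, A₂) is a greatest lower bound of A₁ and A₂ with respect to ≼. -/
/-- The synchronous product `GLB(M₁, M₂)`: states are pairs of states; visible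
actions are taken synchronously by both components, while internal actions of
either component are taken independently. -/
def glbLTS {Q₁ Q₂ A : Type} (M₁ : LTS Q₁ A) (M₂ : LTS Q₂ A) (V : A → Bool) :
    LTS (Q₁ × Q₂) A where
  init := (M₁.init, M₂.init)
  step := fun s α s' =>
    (V α = true ∧ M₁.step s.1 α s'.1 ∧ M₂.step s.2 α s'.2) ∨
    (V α = false ∧
      ((M₁.step s.1 α s'.1 ∧ s'.2 = s.2) ∨ (M₂.step s.2 α s'.2 ∧ s'.1 = s.1)))


theorem LTS.Steps.append' {Q A : Type} {M : LTS Q A} {q q' q'' : Q} {l l' : List A}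
    (h : M.Steps q l q') (h' : M.Steps q' l' q'') : M.Steps q (l ++ l') q'' := by
  induction h with
  | nil => exact h'
  | cons s _ ih => exact .cons s (ih h')

theorem glb_left {Q₁ Q₂ A : Type} {M₁ : LTS Q₁ A} {M₂ : LTS Q₂ A} {V : A → Bool}
    {q₁ q₁' : Q₁} {l : List A} (h : M₁.Steps q₁ l q₁') (hl : l.filter V = [])
    (q₂ : Q₂) : (glbLTS M₁ M₂ V).Steps (q₁, q₂) l (q₁', q₂) := by
  induction h with
  | nil => exact .nil _
  | @cons qa qb qc α l s _ ih =>
    rw [List.filter_cons] at hl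
    split at hl
    · simp at hl
    · rename_i hv
      simp only [Bool.not_eq_true] at hv
      exact .cons (show (glbLTS M₁ M₂ V).step (qa, q₂) α (qb, q₂) from
        Or.inr ⟨hv, Or.inl ⟨s, rfl⟩⟩) (ih hl)

theorem glb_right {Q₁ Q₂ A : Type} {M₁ : LTS Q₁ A} {M₂ : LTS Q₂ A} {V : A → Bool}
    {q₂ q₂' : Q₂} {l : List A} (h : M₂.Steps q₂ l q₂') (hl : l.filter V = [])
    (q₁ : Q₁) : (glbLTS M₁ M₂ V).Steps (q₁, q₂) l (q₁, q₂') := by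
  induction h with
  | nil => exact .nil _
  | @cons qa qb qc α l s _ ih =>
    rw [List.filter_cons] at hl
    split at hl
    · simp at hl
    · rename_i hv
      simp only [Bool.not_eq_true] at hv
      exact .cons (show (glbLTS M₁ M₂ V).step (q₁, qa) α (q₁, qb) from
        Or.inr ⟨hv, Or.inr ⟨s, rfl⟩⟩) (ih hl)

theorem steps_split {Q A : Type} {M : LTS Q A} {V : A → Bool} {q q' : Q}
    {l : List A} {α : A} {t : List A}
    (h : M.Steps q l q') (hl : l.filter V = α :: t) :
    ∃ p qa qb r, M.Steps q p qa ∧ p.filter V = [] ∧ M.step qa α qb ∧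
      M.Steps qb r q' ∧ r.filter V = t := by
  induction h with
  | nil => simp at hl
  | cons s hrest ih =>
    rw [List.filter_cons] at hl
    split at hl
    · injection hl with h1 h2
      subst h1; subst h2
      exact ⟨[], _, _, _, .nil _, rfl, s, hrest, rfl⟩
    · rename_i hv
      simp only [Bool.not_eq_true] at hv
      obtain ⟨p, qa, qb, r, hp, hpf, hstep, hr, hrf⟩ := ih hl
      exact ⟨_ :: p, qa, qb, r, .cons s hp,
        by simp [List.filter_cons, hv, hpf], hstep, hr, hrf⟩

theorem glb_interleave {Q₁ Q₂ A : Type} {M₁ : LTS Q₁ A} {M₂ : LTS Q₂ A}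
    {V : A → Bool} {q₁ q₁' : Q₁} {l₁ : List A} (h₁ : M₁.Steps q₁ l₁ q₁') :
    ∀ {q₂ q₂' : Q₂} {l₂ : List A}, M₂.Steps q₂ l₂ q₂' →
      l₂.filter V = l₁.filter V →
      ∃ l, (glbLTS M₁ M₂ V).Steps (q₁, q₂) l (q₁', q₂') ∧
        l.filter V = l₁.filter V := by
  induction h₁ with
  | nil q => intro q₂ q₂' l₂ h₂ hf
             exact ⟨l₂, glb_right h₂ hf q, hf⟩
  | cons s hrest ih =>
    rename_i qa qb qc β l₁
    intro q₂ q₂' l₂ h₂ hf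
    by_cases hv : V β = true
    · rw [List.filter_cons, if_pos hv] at hf
      obtain ⟨p, pa, pb, r, hp, hpf, hstep, hr, hrf⟩ := steps_split h₂ hf
      obtain ⟨l, hs, hlf⟩ := ih hr hrf
      refine ⟨p ++ β :: l, ?_, ?_⟩
      · exact (glb_right hp hpf qa).append'
          (.cons (Or.inl ⟨hv, s, hstep⟩) hs)
      · simp [List.filter_append, hpf, List.filter_cons, hv, hlf]
    · simp only [Bool.not_eq_true] at hv
      rw [List.filter_cons, if_neg (by simp [hv])] at hf
      obtain ⟨l, hs, hlf⟩ := ih h₂ hf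
      refine ⟨β :: l, .cons (show (glbLTS M₁ M₂ V).step (qa, q₂) β (qb, q₂) from
        Or.inr ⟨hv, Or.inl ⟨s, rfl⟩⟩) hs, ?_⟩
      simp [List.filter_cons, hv, hlf]

/-- If `R₁` is a forward simulation from `M₃` to `M₁` and `R₂` one from `M₃` to
`M₂`, then pairing them yields a forward simulation from `M₃` to `GLB(M₁, M₂)`;
hence `GLB(M₁, M₂)` is a greatest lower bound of `M₁` and `M₂` w.r.t. `≼`. -/
theorem glb_is_greatest_lower_bound {Q₁ Q₂ Q₃ A : Type}
    (M₁ : LTS Q₁ A) (M₂ : LTS Q₂ A) (M₃ : LTS Q₃ A) (V : A → Bool)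
    (R₁ : Q₃ → Q₁ → Prop) (R₂ : Q₃ → Q₂ → Prop)
    (h₁ : IsSim V M₃ M₁ R₁) (h₂ : IsSim V M₃ M₂ R₂) :
    IsSim V M₃ (glbLTS M₁ M₂ V) (fun c s => R₁ c s.1 ∧ R₂ c s.2) ∧
    Sim V M₃ (glbLTS M₁ M₂ V) ∧
    Sim V (glbLTS M₁ M₂ V) M₁ ∧ Sim V (glbLTS M₁ M₂ V) M₂ := by
  refine ⟨⟨⟨h₁.1, h₂.1⟩, ?_⟩, ?_, ?_, ?_⟩
  · intro c s α c' hR hstep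
    obtain ⟨l₁, p₁, hs1, hf1, hR1⟩ := h₁.2 c s.1 α c' hR.1 hstep
    obtain ⟨l₂, p₂, hs2, hf2, hR2⟩ := h₂.2 c s.2 α c' hR.2 hstep
    obtain ⟨l, hs, hlf⟩ := glb_interleave hs1 hs2 (hf2.trans hf1.symm)
    exact ⟨l, (p₁, p₂), hs, hlf.trans hf1, hR1, hR2⟩
  · refine ⟨fun c s => R₁ c s.1 ∧ R₂ c s.2, ⟨h₁.1, h₂.1⟩, ?_⟩
    intro c s α c' hR hstep
    obtain ⟨l₁, p₁, hs1, hf1, hR1⟩ := h₁.2 c s.1 α c' hR.1 hstep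
    obtain ⟨l₂, p₂, hs2, hf2, hR2⟩ := h₂.2 c s.2 α c' hR.2 hstep
    obtain ⟨l, hs, hlf⟩ := glb_interleave hs1 hs2 (hf2.trans hf1.symm)
    exact ⟨l, (p₁, p₂), hs, hlf.trans hf1, hR1, hR2⟩
  · refine ⟨fun s q => s.1 = q, rfl, ?_⟩
    rintro s q α s' rfl hstep
    rcases hstep with ⟨hv, hst, -⟩ | ⟨hv, ⟨hst, -⟩ | ⟨-, he⟩⟩
    · exact ⟨[α], s'.1, .cons hst (.nil _), rfl, rfl⟩
    · exact ⟨[α], s'.1, .cons hst (.nil _), rfl, rfl⟩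
    · exact ⟨[], s.1, .nil _, by simp [List.filter_cons, hv], he⟩
  · refine ⟨fun s q => s.2 = q, rfl, ?_⟩
    rintro s q α s' rfl hstep
    rcases hstep with ⟨hv, -, hst⟩ | ⟨hv, ⟨-, he⟩ | ⟨hst, -⟩⟩
    · exact ⟨[α], s'.2, .cons hst (.nil _), rfl, rfl⟩
    · exact ⟨[], s.2, .nil _, by simp [List.filter_cons, hv], he⟩
    · exact ⟨[α], s'.2, .cons hst (.nil _), rfl, rfl⟩
end
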